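/- Let p > 1, b, f ∈ L¹([0,T], ℝ≥0), a ∈ L¹([0,T], ℝ), and let x ∈ W^{1,1}([0,T], ℝ≥0) ∩ C⁰([0,T], ℝ≥0) satisfy ẋ ≤ b(t)x^p + a(t)x + f(t) with x(0) = x₀. Define A(t) = ∫₀ᵗ a(s) ds, b̃(t) = b(t)e^{(p−1)A(t)}, f̃(t) = e^{−A(t)}f(t). Then for all t ∈ [0,T] with (p−1)(x₀ + ∫₀ᵗ f̃ ds)^{p−1} ∫₀ᵗ b̃ ds < 1, one has x(t) ≤ e^{A(t)}(x₀ + ∫₀ᵗ f̃(s) ds)·(1 − (p−1)(x₀ + ∫₀ᵗ f̃(s) ds)^{p−1} ∫₀ᵗ b̃(s) ds)^{−1/(p−1)}. -/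

import Mathlib

/-!
The integrating factor `e^{-A}` removes the linear term: `y = e^{-A} x` satisfies
`y' ≤ b̃ y^p + f̃` almost everywhere, so `w(s) = y(s) + ∫ₛᵗ f̃` satisfies `w' ≤ b̃ w^p` with
`w(0) = x₀ + ∫₀ᵗ f̃` and `w(t) = y(t)`. Bihari's argument then integrates
`(w^{1-p})' = (1-p) w^{-p} w' ≥ (1-p) b̃` from `0` to `t`, which inverts to the stated bound;
when `w(0) = 0` it is run for `w + ε` and `ε → 0`. All the calculus is the fundamental theorem of
calculus for absolutely continuous functions.
-/

open MeasureTheory Set intervalIntegral Filter Topology NNReal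

theorem LipschitzOnWith.comp_absolutelyContinuousOnInterval {X Y : Type*} [PseudoMetricSpace X]
    [PseudoMetricSpace Y] {g : X → Y} {K : ℝ≥0} {s : Set X} {f : ℝ → X} {a b : ℝ}
    (hg : LipschitzOnWith K g s) (hf : AbsolutelyContinuousOnInterval f a b)
    (hfs : MapsTo f (uIcc a b) s) : AbsolutelyContinuousOnInterval (g ∘ f) a b := by
  have hK := (tendsto_const_nhds (x := (K : ℝ))).mul hf
  rw [mul_zero] at hK
  refine squeeze_zero' (.of_forall fun _ ↦ Finset.sum_nonneg fun _ _ ↦ dist_nonneg) ?_ hK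
  filter_upwards [mem_inf_of_right (mem_principal_self _)] with E hE
  rw [Finset.mul_sum]
  gcongr with i hi
  exact hg.dist_le_mul _ (hfs (hE.1 i hi).1) _ (hfs (hE.1 i hi).2)

theorem ContDiffOn.comp_absolutelyContinuousOnInterval {E : Type*} [NormedAddCommGroup E]
    [NormedSpace ℝ E] {g : ℝ → E} {s : Set ℝ} {f : ℝ → ℝ} {a b : ℝ}
    (hg : ContDiffOn ℝ 1 g s) (hs : Convex ℝ s) (hs' : IsCompact s)
    (hf : AbsolutelyContinuousOnInterval f a b) (hfs : MapsTo f (uIcc a b) s) :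
    AbsolutelyContinuousOnInterval (g ∘ f) a b :=
  (hg.exists_lipschitzOnWith one_ne_zero hs hs').choose_spec.comp_absolutelyContinuousOnInterval
    hf hfs

theorem IntervalIntegrable.absolutelyContinuousOnInterval_const_add_integral {φ : ℝ → ℝ}
    {a b : ℝ} (hφ : IntervalIntegrable φ volume a b) (c : ℝ) :
    AbsolutelyContinuousOnInterval (fun s ↦ c + ∫ u in a..s, φ u) a b :=
  contDiffOn_const.absolutelyContinuousOnInterval.add
    (hφ.absolutelyContinuousOnInterval_intervalIntegral left_mem_uIcc)

theorem IntervalIntegrable.ae_hasDerivAt_const_add_integral {φ : ℝ → ℝ} {a b : ℝ}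
    (hφ : IntervalIntegrable φ volume a b) (c : ℝ) :
    ∀ᵐ s, s ∈ uIcc a b → HasDerivAt (fun s ↦ c + ∫ u in a..s, φ u) (φ s) s := by
  filter_upwards [hφ.ae_hasDerivAt_integral] with s hs hsab
  exact (hs hsab a left_mem_uIcc).const_add c

theorem AbsolutelyContinuousOnInterval.integral_le_sub_of_ae_le_deriv {f g : ℝ → ℝ} {a b : ℝ}
    (hf : AbsolutelyContinuousOnInterval f a b) (hab : a ≤ b)
    (hg : IntervalIntegrable g volume a b) (h : ∀ᵐ s, s ∈ Icc a b → g s ≤ deriv f s) :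
    ∫ s in a..b, g s ≤ f b - f a := by
  rw [← hf.integral_deriv_eq_sub]
  exact integral_mono_ae_restrict hab hg hf.intervalIntegrable_deriv
    ((ae_restrict_iff' measurableSet_Icc).2 h)

noncomputable def bihariBound (p B c : ℝ) : ℝ :=
  c * (1 - (p - 1) * c ^ (p - 1) * B) ^ (-(1 / (p - 1)))

theorem le_bihariBound_of_rpow_le {p B c u : ℝ} (hp : 1 < p) (hc : 0 < c) (hu : 0 < u)
    (hcond : (p - 1) * c ^ (p - 1) * B < 1) (h : c ^ (1 - p) - (p - 1) * B ≤ u ^ (1 - p)) :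
    u ≤ bihariBound p B c := by
  have hD : 0 < 1 - (p - 1) * c ^ (p - 1) * B := by linarith
  have hbound : 0 < bihariBound p B c := mul_pos hc (Real.rpow_pos_of_pos hD _)
  refine (Real.rpow_le_rpow_iff_of_neg hbound hu (by linarith)).1 (h.trans' (le_of_eq ?_))
  have hexp : -(1 / (p - 1)) * (1 - p) = 1 := by
    field_simp [(by linarith : p - 1 ≠ 0)]
    ring
  have hcc : c ^ (1 - p) * c ^ (p - 1) = 1 := by rw [← Real.rpow_add hc]; simp
  rw [bihariBound, Real.mul_rpow hc.le (Real.rpow_nonneg hD.le _), ← Real.rpow_mul hD.le, hexp,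
    Real.rpow_one]
  linear_combination (-(p - 1) * B) * hcc

theorem le_bihariBound_of_ae_deriv_le_of_pos {p a b : ℝ} {w β : ℝ → ℝ} (hp : 1 < p) (hab : a ≤ b)
    (hw : AbsolutelyContinuousOnInterval w a b) (hwpos : ∀ s ∈ Icc a b, 0 < w s)
    (hβ : IntervalIntegrable β volume a b)
    (hderiv : ∀ᵐ s, s ∈ Icc a b → deriv w s ≤ β s * w s ^ p)
    (hcond : (p - 1) * w a ^ (p - 1) * ∫ s in a..b, β s < 1) :
    w b ≤ bihariBound p (∫ s in a..b, β s) (w a) := by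
  rw [← uIcc_of_le hab] at hwpos
  obtain ⟨s₀, hs₀, hmin⟩ := isCompact_uIcc.exists_isMinOn nonempty_uIcc hw.continuousOn
  obtain ⟨M, hM⟩ := hw.exists_bound
  have hmaps : MapsTo w (uIcc a b) (Icc (w s₀) M) := fun s hs ↦
    ⟨hmin hs, (le_abs_self _).trans (hM s hs)⟩
  have hpow : ContDiffOn ℝ 1 (fun z : ℝ ↦ z ^ (1 - p)) (Icc (w s₀) M) := fun z hz ↦
    (Real.contDiffAt_rpow_const_of_ne ((hwpos s₀ hs₀).trans_le hz.1).ne').contDiffWithinAt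
  have hpow_w := hpow.comp_absolutelyContinuousOnInterval (convex_Icc _ _) isCompact_Icc hw hmaps
  have key := hpow_w.integral_le_sub_of_ae_le_deriv hab (hβ.const_mul (1 - p)) ?_
  · refine le_bihariBound_of_rpow_le hp (hwpos a left_mem_uIcc) (hwpos b right_mem_uIcc) hcond ?_
    rw [intervalIntegral.integral_const_mul] at key
    simp only [Function.comp_apply] at key
    linarith
  filter_upwards [hderiv, hw.ae_differentiableAt] with s hs hdiff hsI
  have hsI' : s ∈ uIcc a b := by rwa [uIcc_of_le hab]
  have hws := hwpos s hsI'
  rw [((Real.hasDerivAt_rpow_const (Or.inl hws.ne')).comp s (hdiff hsI').hasDerivAt).deriv,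
    show 1 - p - 1 = -p by ring]
  have hinv : w s ^ (-p) * w s ^ p = 1 := by rw [← Real.rpow_add hws]; simp
  have hneg : (1 - p) * w s ^ (-p) ≤ 0 :=
    mul_nonpos_of_nonpos_of_nonneg (by linarith) (Real.rpow_nonneg hws.le _)
  calc (1 - p) * β s = (1 - p) * w s ^ (-p) * (β s * w s ^ p) := by
        linear_combination (-(1 - p) * β s) * hinv
    _ ≤ (1 - p) * w s ^ (-p) * deriv w s := mul_le_mul_of_nonpos_left (hs hsI) hneg

theorem le_bihariBound_of_ae_deriv_le {p a b : ℝ} {w β : ℝ → ℝ} (hp : 1 < p) (hab : a ≤ b)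
    (hw : AbsolutelyContinuousOnInterval w a b) (hw0 : ∀ s ∈ Icc a b, 0 ≤ w s)
    (hβ : IntervalIntegrable β volume a b) (hβ0 : ∀ s ∈ Icc a b, 0 ≤ β s)
    (hderiv : ∀ᵐ s, s ∈ Icc a b → deriv w s ≤ β s * w s ^ p)
    (hcond : (p - 1) * w a ^ (p - 1) * ∫ s in a..b, β s < 1) :
    w b ≤ bihariBound p (∫ s in a..b, β s) (w a) := by
  set B := ∫ s in a..b, β s
  have hF : ContinuousAt (fun c : ℝ ↦ (p - 1) * c ^ (p - 1) * B) (w a) :=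
    (((Real.continuous_rpow_const (by linarith)).continuousAt).const_mul _).mul_const _
  have hbound : ContinuousAt (bihariBound p B) (w a) :=
    continuousAt_id.mul ((continuousAt_const.sub hF).rpow_const
      (Or.inl (by simp only [Pi.sub_apply]; linarith)))
  have hev : ∀ᶠ c in 𝓝[>] (w a), w b ≤ bihariBound p B c := by
    filter_upwards [self_mem_nhdsWithin, nhdsWithin_le_nhds (hF.eventually (gt_mem_nhds hcond))]
      with c hc hcond'
    have hε : 0 < c - w a := sub_pos.2 hc
    have := le_bihariBound_of_ae_deriv_le_of_pos hp hab
      (hw.add (contDiffOn_const (c := c - w a)).absolutelyContinuousOnInterval)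
      (fun s hs ↦ add_pos_of_nonneg_of_pos (hw0 s hs) hε) hβ ?_ (by simpa using hcond')
    · simp only [Pi.add_apply, add_sub_cancel] at this
      linarith
    filter_upwards [hderiv] with s hs hsI
    rw [Pi.add_def, deriv_add_const]
    exact (hs hsI).trans (mul_le_mul_of_nonneg_left (Real.rpow_le_rpow (hw0 s hsI)
      (by linarith) (by linarith)) (hβ0 s hsI))
  exact ge_of_tendsto (hbound.tendsto.mono_left nhdsWithin_le_nhds) hev

theorem deriv_exp_neg_mul_sub_le {A X F : ℝ → ℝ} {s α X' β φ p : ℝ} (hp : 0 ≤ p)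
    (hA : HasDerivAt A α s) (hX : HasDerivAt X X' s)
    (hF : HasDerivAt F (Real.exp (-A s) * φ) s) (hX0 : 0 ≤ X s) (hF0 : F s ≤ 0) (hβ : 0 ≤ β)
    (h : X' ≤ β * X s ^ p + α * X s + φ) :
    deriv (fun s ↦ Real.exp (-A s) * X s - F s) s ≤
      β * Real.exp ((p - 1) * A s) * (Real.exp (-A s) * X s - F s) ^ p := by
  rw [(hA.fun_neg.exp.fun_mul hX |>.fun_sub hF).deriv]
  have hexp : Real.exp ((p - 1) * A s) * Real.exp (-A s * p) = Real.exp (-A s) := by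
    rw [← Real.exp_add]; ring_nf
  have hpow : β * Real.exp ((p - 1) * A s) * (Real.exp (-A s) * X s) ^ p =
      Real.exp (-A s) * (β * X s ^ p) := by
    rw [Real.mul_rpow (Real.exp_pos _).le hX0, ← Real.exp_mul, ← hexp]
    ring
  calc Real.exp (-A s) * -α * X s + Real.exp (-A s) * X' - Real.exp (-A s) * φ
      = Real.exp (-A s) * (X' - α * X s - φ) := by ring
    _ ≤ Real.exp (-A s) * (β * X s ^ p) :=
      mul_le_mul_of_nonneg_left (by linarith) (Real.exp_pos _).le
    _ = β * Real.exp ((p - 1) * A s) * (Real.exp (-A s) * X s) ^ p := hpow.symm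
    _ ≤ β * Real.exp ((p - 1) * A s) * (Real.exp (-A s) * X s - F s) ^ p :=
      mul_le_mul_of_nonneg_left (Real.rpow_le_rpow (mul_nonneg (Real.exp_pos _).le hX0)
        (by linarith) hp) (mul_nonneg hβ (Real.exp_pos _).le)

theorem exp_neg_mul_le_bihariBound {p t₀ t : ℝ} {A X a b f X' : ℝ → ℝ} (hp : 1 < p)
    (ht : t₀ ≤ t) (hA : AbsolutelyContinuousOnInterval A t₀ t)
    (hX : AbsolutelyContinuousOnInterval X t₀ t)
    (hA' : ∀ᵐ s, s ∈ uIcc t₀ t → HasDerivAt A (a s) s)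
    (hX' : ∀ᵐ s, s ∈ uIcc t₀ t → HasDerivAt X (X' s) s) (hX0 : ∀ s ∈ Icc t₀ t, 0 ≤ X s)
    (hb : IntervalIntegrable b volume t₀ t) (hb0 : ∀ s ∈ Icc t₀ t, 0 ≤ b s)
    (hf : IntervalIntegrable f volume t₀ t) (hf0 : ∀ s ∈ Icc t₀ t, 0 ≤ f s)
    (hineq : ∀ᵐ s, s ∈ Icc t₀ t → X' s ≤ b s * X s ^ p + a s * X s + f s)
    (hcond : (p - 1) * (Real.exp (-A t₀) * X t₀ + ∫ s in t₀..t, Real.exp (-A s) * f s) ^ (p - 1) *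
      (∫ s in t₀..t, b s * Real.exp ((p - 1) * A s)) < 1) :
    Real.exp (-A t) * X t ≤ bihariBound p (∫ s in t₀..t, b s * Real.exp ((p - 1) * A s))
      (Real.exp (-A t₀) * X t₀ + ∫ s in t₀..t, Real.exp (-A s) * f s) := by
  obtain ⟨M, hM⟩ := hA.exists_bound
  have hE : AbsolutelyContinuousOnInterval (fun s ↦ Real.exp (-A s)) t₀ t :=
    (Real.contDiff_exp.comp contDiff_neg).contDiffOn.comp_absolutelyContinuousOnInterval
      (convex_Icc (-M) M) isCompact_Icc hA fun s hs ↦ abs_le.1 (hM s hs)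
  have hEf : IntervalIntegrable (fun s ↦ Real.exp (-A s) * f s) volume t₀ t :=
    hf.continuousOn_mul hE.continuousOn
  have hbE : IntervalIntegrable (fun s ↦ b s * Real.exp ((p - 1) * A s)) volume t₀ t :=
    hb.mul_continuousOn (Real.continuous_exp.comp_continuousOn
      (hA.continuousOn.const_smul (p - 1)))
  have hF0 : ∀ s ∈ Icc t₀ t, ∫ u in t..s, Real.exp (-A u) * f u ≤ 0 := fun s hs ↦ by
    rw [integral_symm]
    exact neg_nonpos.2 <| integral_nonneg hs.2 fun u hu ↦
      mul_nonneg (Real.exp_pos _).le (hf0 u ⟨hs.1.trans hu.1, hu.2⟩)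
  have hwt₀ : Real.exp (-A t₀) * X t₀ - ∫ u in t..t₀, Real.exp (-A u) * f u =
      Real.exp (-A t₀) * X t₀ + ∫ s in t₀..t, Real.exp (-A s) * f s := by
    rw [integral_symm t₀ t, sub_neg_eq_add]
  have key := le_bihariBound_of_ae_deriv_le
    (w := fun s ↦ Real.exp (-A s) * X s - ∫ u in t..s, Real.exp (-A u) * f u) hp ht
    ((hE.fun_mul hX).sub (hEf.absolutelyContinuousOnInterval_intervalIntegral right_mem_uIcc))
    (fun s hs ↦ sub_nonneg.2 <| (hF0 s hs).trans (mul_nonneg (Real.exp_pos _).le (hX0 s hs)))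
    hbE (fun s hs ↦ mul_nonneg (hb0 s hs) (Real.exp_pos _).le) ?_ (hwt₀ ▸ hcond)
  · rwa [integral_same, sub_zero, hwt₀] at key
  filter_upwards [hA', hX', hineq, hEf.ae_hasDerivAt_integral] with s hAs hXs hineqs hFs hsI
  have hsI' := Icc_subset_uIcc hsI
  exact deriv_exp_neg_mul_sub_le (by linarith) (hAs hsI') (hXs hsI') (hFs hsI' t right_mem_uIcc)
    (hX0 s hsI) (hF0 s hsI) (hb0 s hsI) (hineqs hsI)

theorem cp_type_II_general (T : ℝ) (p : ℝ) (hp : 1 < p)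
    (a b f x x' : ℝ → ℝ) (x₀ : ℝ)
    (ha : IntegrableOn a (Icc 0 T))
    (hb : IntegrableOn b (Icc 0 T)) (hbnn : ∀ t ∈ Icc (0:ℝ) T, 0 ≤ b t)
    (hf : IntegrableOn f (Icc 0 T)) (hfnn : ∀ t ∈ Icc (0:ℝ) T, 0 ≤ f t)
    (hxnn : ∀ t ∈ Icc (0:ℝ) T, 0 ≤ x t)
    (hx' : IntegrableOn x' (Icc 0 T))
    (hxAC : ∀ t ∈ Icc (0:ℝ) T, x t = x 0 + ∫ s in (0:ℝ)..t, x' s)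
    (hineq : ∀ᵐ t ∂(volume.restrict (Icc (0:ℝ) T)),
      x' t ≤ b t * x t ^ p + a t * x t + f t)
    (hx0 : x 0 = x₀)
    (A btilde ftilde : ℝ → ℝ)
    (hA : ∀ t, A t = ∫ s in (0:ℝ)..t, a s)
    (hbt : ∀ t, btilde t = b t * Real.exp ((p - 1) * A t))
    (hft : ∀ t, ftilde t = Real.exp (-A t) * f t) :
    ∀ t ∈ Icc (0:ℝ) T,
      (p - 1) * (x₀ + ∫ s in (0:ℝ)..t, ftilde s) ^ (p - 1) *
        (∫ s in (0:ℝ)..t, btilde s) < 1 →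
      x t ≤ Real.exp (A t) * (x₀ + ∫ s in (0:ℝ)..t, ftilde s) *
        (1 - (p - 1) * (x₀ + ∫ s in (0:ℝ)..t, ftilde s) ^ (p - 1) *
          (∫ s in (0:ℝ)..t, btilde s)) ^ (-(1 / (p - 1))) := by
  intro t ht hcond
  have hA_eq : A = fun t ↦ ∫ s in (0:ℝ)..t, a s := funext hA
  have hsub : Icc 0 t ⊆ Icc 0 T := Icc_subset_Icc le_rfl ht.2
  have hI : ∀ φ : ℝ → ℝ, IntegrableOn φ (Icc 0 T) → IntervalIntegrable φ volume 0 t :=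
    fun φ hφ ↦ (intervalIntegrable_iff_integrableOn_Icc_of_le ht.1).2 (hφ.mono_set hsub)
  have hXx : ∀ s ∈ Icc 0 T, x s = x₀ + ∫ u in (0:ℝ)..s, x' u := fun s hs ↦ by
    rw [hxAC s hs, hx0]
  have hinit : Real.exp (-A 0) * (x₀ + ∫ u in (0:ℝ)..0, x' u) = x₀ := by simp [hA]
  have key := exp_neg_mul_le_bihariBound hp ht.1
    (hA_eq ▸ (hI a ha).absolutelyContinuousOnInterval_intervalIntegral left_mem_uIcc)
    ((hI x' hx').absolutelyContinuousOnInterval_const_add_integral x₀)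
    (by filter_upwards [(hI a ha).ae_hasDerivAt_integral] with u hu huI
        exact hA_eq ▸ hu huI 0 left_mem_uIcc)
    ((hI x' hx').ae_hasDerivAt_const_add_integral x₀)
    (fun u hu ↦ (hxnn u (hsub hu)).trans_eq (hXx u (hsub hu)))
    (hI b hb) (fun u hu ↦ hbnn u (hsub hu)) (hI f hf) (fun u hu ↦ hfnn u (hsub hu))
    (by filter_upwards [(ae_restrict_iff' measurableSet_Icc).1 hineq] with u hu huI
        simpa only [hXx u (hsub huI)] using hu (hsub huI))
    (by simpa only [hinit, ← hbt, ← hft] using hcond)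
  simp only [hinit, ← hbt, ← hft] at key
  calc x t = Real.exp (A t) * (Real.exp (-A t) * (x₀ + ∫ u in (0:ℝ)..t, x' u)) := by
        rw [hXx t ht, ← mul_assoc, ← Real.exp_add, add_neg_cancel, Real.exp_zero, one_mul]
    _ ≤ _ := by
        rw [mul_assoc]
        exact mul_le_mul_of_nonneg_left key (Real.exp_pos _).le

/-- CP-Type II: explicit upper bound for `ẋ ≤ b(t)x^p + a(t)x + f(t)`. -/
theorem cp_type_II (T : ℝ) (hT : 0 ≤ T) (p : ℝ) (hp : 1 < p)
    (a b f x x' : ℝ → ℝ) (x₀ : ℝ)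
    (ha : IntegrableOn a (Icc 0 T))
    (hb : IntegrableOn b (Icc 0 T)) (hbnn : ∀ t ∈ Icc (0:ℝ) T, 0 ≤ b t)
    (hf : IntegrableOn f (Icc 0 T)) (hfnn : ∀ t ∈ Icc (0:ℝ) T, 0 ≤ f t)
    (hxnn : ∀ t ∈ Icc (0:ℝ) T, 0 ≤ x t)
    (hx' : IntegrableOn x' (Icc 0 T)) (hxc : ContinuousOn x (Icc 0 T))
    (hxAC : ∀ t ∈ Icc (0:ℝ) T, x t = x 0 + ∫ s in (0:ℝ)..t, x' s)
    (hineq : ∀ᵐ t ∂(volume.restrict (Icc (0:ℝ) T)),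
      x' t ≤ b t * x t ^ p + a t * x t + f t)
    (hx0 : x 0 = x₀)
    (A btilde ftilde : ℝ → ℝ)
    (hA : ∀ t, A t = ∫ s in (0:ℝ)..t, a s)
    (hbt : ∀ t, btilde t = b t * Real.exp ((p - 1) * A t))
    (hft : ∀ t, ftilde t = Real.exp (-A t) * f t) :
    ∀ t ∈ Icc (0:ℝ) T,
      (p - 1) * (x₀ + ∫ s in (0:ℝ)..t, ftilde s) ^ (p - 1) *
        (∫ s in (0:ℝ)..t, btilde s) < 1 →
      x t ≤ Real.exp (A t) * (x₀ + ∫ s in (0:ℝ)..t, ftilde s) *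
        (1 - (p - 1) * (x₀ + ∫ s in (0:ℝ)..t, ftilde s) ^ (p - 1) *
          (∫ s in (0:ℝ)..t, btilde s)) ^ (-(1 / (p - 1))) :=
  cp_type_II_general T p hp a b f x x' x₀ ha hb hbnn hf hfnn hxnn hx' hxAC hineq hx0 A btilde ftilde
    hA hbt hft
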